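/- Every rational number p/q > 1 with p, q coprime and not both odd admits a continued fraction expansion p/q = b₁ + 1/(b₂ + 1/(⋯ + 1/b_v)) in which every b_j is a nonzero even integer. -/
import Mathlib


/-- The continued fraction `C(a₁,…,a_u) = a₁ + 1/C(a₂,…,a_u)`, `C(a_u) = a_u`. -/
def contFrac : List ℚ → ℚ
  | [] => 0
  | [a] => a
  | a :: b :: l => a + (contFrac (b :: l))⁻¹

lemma map_cast_cons (a : ℤ) (l : List ℤ) :
    (a :: l).map (fun x => (x : ℚ)) = (a : ℚ) :: l.map (fun x => (x : ℚ)) := rfl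

theorem exists_even_contFrac_aux : ∀ q : ℕ, 0 < q → ∀ p : ℤ,
    IsCoprime p (q : ℤ) → ¬(Odd p ∧ Odd ((q : ℕ) : ℤ)) → (q : ℤ) < |p| →
    ∃ b : List ℤ, b ≠ [] ∧ (∀ x ∈ b, x ≠ 0 ∧ Even x) ∧
      contFrac (b.map (fun x => (x : ℚ))) = (p : ℚ) / q := by
  intro q
  induction q using Nat.strong_induction_on with
  | _ q IH =>
    intro hq p hco hpar hlt
    rcases eq_or_lt_of_le (Nat.one_le_iff_ne_zero.mpr hq.ne') with hq1 | hq2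
    · -- base case q = 1
      have hq1 : q = 1 := hq1.symm
      subst hq1
      have hop : ¬ Odd p := by
        intro h; exact hpar ⟨h, by norm_num⟩
      have hep : Even p := Int.not_odd_iff_even.mp hop
      have hp0 : p ≠ 0 := by
        intro h; rw [h] at hlt; simp at hlt
      refine ⟨[p], by simp, ?_, ?_⟩
      · intro x hx
        simp only [List.mem_singleton] at hx
        exact ⟨hx ▸ hp0, hx ▸ hep⟩
      · simp [contFrac]
    · -- inductive step, q ≥ 2
      have hqZ : (2 : ℤ) ≤ (q : ℤ) := by exact_mod_cast hq2
      have h2q : (0 : ℤ) < 2 * q := by linarith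
      have hlt' : (q : ℤ) < p ∨ p < -(q : ℤ) := by
        rcases abs_cases p with ⟨h1, h2⟩ | ⟨h1, h2⟩ <;> omega
      set s : ℤ := p % (2 * q) with hs
      set k : ℤ := p / (2 * q) with hk
      have hs0 : 0 ≤ s := Int.emod_nonneg p h2q.ne'
      have hs2q : s < 2 * q := Int.emod_lt_of_pos p h2q
      have hdm := Int.mul_ediv_add_emod p (2 * (q : ℤ))
      have hps : p = 2 * (q : ℤ) * k + s := by
        rw [hk, hs]; linarith [hdm]
      set b : ℤ := if s < q then 2 * k else 2 * k + 2 with hb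
      set r : ℤ := p - b * q with hr
      have hndvd : ¬ ((q : ℤ) ∣ p) := by
        intro hd
        have hu : IsUnit ((q : ℤ)) := hco.isUnit_of_dvd' hd dvd_rfl
        rw [Int.isUnit_iff] at hu
        omega
      have hbeven : Even b := by
        rw [hb]; split
        · exact ⟨k, by ring⟩
        · exact ⟨k + 1, by ring⟩
      have h1 : (s < (q : ℤ) ∧ r = s) ∨ (¬ s < (q : ℤ) ∧ r = s - 2 * (q : ℤ)) := by
        by_cases hcase : s < (q : ℤ)
        · exact Or.inl ⟨hcase, by rw [hr, hb, if_pos hcase]; linear_combination hps⟩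
        · exact Or.inr ⟨hcase, by rw [hr, hb, if_neg hcase]; linear_combination hps⟩
      have hr3 : r ≠ 0 := by
        intro h0
        apply hndvd
        refine ⟨b, ?_⟩
        rw [hr] at h0
        linear_combination h0
      have hrne : r ≠ -(q : ℤ) := by
        intro h0
        apply hndvd
        refine ⟨b - 1, ?_⟩
        rw [hr] at h0
        linear_combination h0
      have hr1 : -(q : ℤ) < r := by rcases h1 with ⟨h2, h3⟩ | ⟨h2, h3⟩ <;> omega
      have hr2 : r < (q : ℤ) := by rcases h1 with ⟨h2, h3⟩ | ⟨h2, h3⟩ <;> omega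
      have hb0 : b ≠ 0 := by
        intro h0
        have : r = p := by rw [hr, h0]; ring
        omega
      set q' : ℕ := r.natAbs with hq'
      set p' : ℤ := if 0 < r then (q : ℤ) else -(q : ℤ) with hp'
      have hq'r : ((q' : ℕ) : ℤ) = |r| := (Int.abs_eq_natAbs r).symm
      have habs : ((q' : ℕ) : ℤ) = r ∨ ((q' : ℕ) : ℤ) = -r := by
        rcases abs_cases r with ⟨h2, _⟩ | ⟨h2, _⟩
        · left; rw [hq'r, h2]
        · right; rw [hq'r, h2]
      have hq'lt : q' < q := by omega
      have hq'pos : 0 < q' := by omega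
      have hcr : IsCoprime r ((q : ℤ)) := by
        have h := hco.add_mul_left_left (-b)
        have he : p + (q : ℤ) * (-b) = r := by rw [hr]; ring
        rwa [he] at h
      have hco' : IsCoprime p' ((q' : ℕ) : ℤ) := by
        rcases habs with h2 | h2
        · have hrpos : 0 < r := by omega
          rw [hp', if_pos hrpos, h2]
          exact hcr.symm
        · have hrneg : ¬ 0 < r := by omega
          rw [hp', if_neg hrneg, h2]
          exact hcr.symm.neg_left.neg_right
      have hdvd2 : (2 : ℤ) ∣ (p - r) := by
        obtain ⟨m, hm⟩ := hbeven
        refine ⟨m * q, ?_⟩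
        rw [hr]
        linear_combination (q : ℤ) * hm
      have hpar' : ¬ (Odd p' ∧ Odd ((q' : ℕ) : ℤ)) := by
        rintro ⟨h2, h3⟩
        apply hpar
        constructor
        · rw [Int.odd_iff] at h3 ⊢
          obtain ⟨t, ht⟩ := hdvd2
          rcases habs with h4 | h4 <;> omega
        · rw [hp'] at h2
          rw [Int.odd_iff] at h2 ⊢
          split at h2 <;> omega
      have hlt2 : ((q' : ℕ) : ℤ) < |p'| := by
        have habsp : |p'| = (q : ℤ) := by
          rw [hp']; split
          · exact abs_of_pos (by omega)
          · rw [abs_neg]; exact abs_of_pos (by omega)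
        omega
      obtain ⟨c, hcne, hcprop, hcval⟩ := IH q' hq'lt hq'pos p' hco' hpar' hlt2
      refine ⟨b :: c, by simp, ?_, ?_⟩
      · intro x hx
        rcases List.mem_cons.mp hx with h | h
        · exact ⟨h ▸ hb0, h ▸ hbeven⟩
        · exact hcprop x h
      · obtain ⟨c₁, ct, rfl⟩ := List.exists_cons_of_ne_nil hcne
        show contFrac ((b :: c₁ :: ct).map (fun x => (x : ℚ))) = (p : ℚ) / q
        rw [map_cast_cons]
        show (b : ℚ) + (contFrac ((c₁ :: ct).map (fun x => (x : ℚ))))⁻¹ = (p : ℚ) / q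
        rw [hcval]
        have hqQ : ((q : ℕ) : ℚ) ≠ 0 := by positivity
        have hrQ : (r : ℚ) ≠ 0 := by exact_mod_cast hr3
        have hfrac : (((p' : ℤ) : ℚ) / ((q' : ℕ) : ℚ))⁻¹ = (r : ℚ) / ((q : ℕ) : ℚ) := by
          rcases habs with h2 | h2
          · have hrpos : 0 < r := by omega
            have h2Q : ((q' : ℕ) : ℚ) = (r : ℚ) := by exact_mod_cast h2
            have hp'Q : ((p' : ℤ) : ℚ) = ((q : ℕ) : ℚ) := by
              rw [hp', if_pos hrpos]; push_cast; ring
            rw [h2Q, hp'Q, inv_div]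
          · have hrneg : ¬ 0 < r := by omega
            have h2Q : ((q' : ℕ) : ℚ) = -(r : ℚ) := by exact_mod_cast h2
            have hp'Q : ((p' : ℤ) : ℚ) = -((q : ℕ) : ℚ) := by
              rw [hp', if_neg hrneg]; push_cast; ring
            rw [h2Q, hp'Q, neg_div_neg_eq, inv_div]
        rw [hfrac]
        have hpr : p = b * (q : ℤ) + r := by rw [hr]; ring
        have hpQ : (p : ℚ) = (b : ℚ) * ((q : ℕ) : ℚ) + (r : ℚ) := by
          exact_mod_cast hpr
        rw [hpQ]
        field_simp

/-- Every rational `p/q > 1` with `p, q` coprime and not both odd admits a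
continued fraction expansion all of whose partial quotients are nonzero even
integers. -/
theorem exists_even_contFrac_expansion
    (p q : ℤ) (hq : 0 < q) (hgt : 1 < (p : ℚ) / q)
    (hco : IsCoprime p q) (hpar : ¬(Odd p ∧ Odd q)) :
    ∃ b : List ℤ, b ≠ [] ∧ (∀ x ∈ b, x ≠ 0 ∧ Even x) ∧
      contFrac (b.map (fun x => (x : ℚ))) = (p : ℚ) / q := by
  have hqQ : (0 : ℚ) < (q : ℚ) := by exact_mod_cast hq
  have hpq : q < p := by
    rw [lt_div_iff₀ hqQ, one_mul] at hgt
    exact_mod_cast hgt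
  set n : ℕ := q.toNat with hn
  have hnq : ((n : ℕ) : ℤ) = q := Int.toNat_of_nonneg hq.le
  have h := exists_even_contFrac_aux n (by omega) p (by rw [hnq]; exact hco)
    (by rw [hnq]; exact hpar) (by rw [hnq, abs_of_pos (by omega)]; omega)
  obtain ⟨b, h1, h2, h3⟩ := h
  refine ⟨b, h1, h2, ?_⟩
  rw [h3]
  have : ((n : ℕ) : ℚ) = ((q : ℤ) : ℚ) := by exact_mod_cast hnq
  rw [this]
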